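/- Completeness of the generic bisimulation game with explicit divergence: for all x, y ∈ {o,b} and all states s, t, if s ≈ed_{(x,y)} t then s ≡ed_{E(x,y)} t, i.e. Duplicator wins the E(x,y)-generic bisimulation with explicit divergence game from the configuration ⟨(s,t),†,†,*⟩_S. -/

import Mathlib

namespace GamesBisim

/-- Parameter values `o` (ordinary) and `b` (branching) for generic bisimulations. -/
inductive XY | o | b
deriving DecidableEq

/-- The faces ☹ (frown) and ☺ (smile). -/
inductive Face | frown | smile
deriving DecidableEq

/-- Rewards: `*` (star) and `✓` (check). -/
inductive Rw | star | check
deriving DecidableEq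

/-- A labelled transition system with states `S`, actions `A` containing a
distinguished silent action `tau`, and a transition relation. -/
structure LTS (S : Type u) (A : Type v) where
  tau : A
  Trans : S → A → S → Prop

namespace LTS

variable {S : Type u} {A : Type v}

/-- A single silent (τ) step. -/
def TauStep (L : LTS S A) (s s' : S) : Prop := L.Trans s L.tau s'

/-- `↠`: the reflexive-transitive closure of the τ-step relation. -/
def TauStar (L : LTS S A) : S → S → Prop := Relation.ReflTransGen L.TauStep

/-- `↠⁺`: the transitive closure of the τ-step relation. -/
def TauPlus (L : LTS S A) : S → S → Prop := Relation.TransGen L.TauStep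

/-- An LTS is non-divergent if it admits no infinite sequence of τ-steps. -/
def NonDivergent (L : LTS S A) : Prop :=
  ¬ ∃ f : ℕ → S, ∀ i, L.TauStep (f i) (f (i + 1))

/-- A symmetric relation `R` is a branching bisimulation. -/
def IsBranchingBisim (L : LTS S A) (R : S → S → Prop) : Prop :=
  (∀ s t, R s t → R t s) ∧
  ∀ s t a s', R s t → L.Trans s a s' →
    (a = L.tau ∧ R s' t) ∨
    ∃ t1 t', L.TauStar t t1 ∧ L.Trans t1 a t' ∧ R s t1 ∧ R s' t'

/-- Branching bisimilarity `≈b`. -/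
def BranchingBisimilar (L : LTS S A) (s t : S) : Prop :=
  ∃ R, L.IsBranchingBisim R ∧ R s t

/-- A symmetric relation `R` is a delay bisimulation. -/
def IsDelayBisim (L : LTS S A) (R : S → S → Prop) : Prop :=
  (∀ s t, R s t → R t s) ∧
  ∀ s t a s', R s t → L.Trans s a s' →
    (a = L.tau ∧ R s' t) ∨
    ∃ t1 t', L.TauStar t t1 ∧ L.Trans t1 a t' ∧ R s' t'

/-- The generalised weak transition `s ↠_{x,R,t} s'`: a weak transition `s ↠ s'`,
which in case `x = b` additionally satisfies `t R s` and `t R s'`. -/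
def GenTauStar (L : LTS S A) (x : XY) (R : S → S → Prop) (t : S) (s s' : S) : Prop :=
  L.TauStar s s' ∧ (x = XY.b → R t s ∧ R t s')

/-- The strong generalised weak transition `s ⟹_{x,R,t} s'`: a weak transition
`s ↠ s'`, which in case `x = b` is witnessed by a finite τ-path all of whose states
are related to `t` by `R`. -/
def SGenTauStar (L : LTS S A) (x : XY) (R : S → S → Prop) (t : S) (s s' : S) : Prop :=
  L.TauStar s s' ∧
  (x = XY.b → R t s ∧ Relation.ReflTransGen (fun u u' => L.TauStep u u' ∧ R t u') s s')

/-- A symmetric relation `R` is an `(x,y)`-generic bisimulation. -/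
def IsGenBisim (L : LTS S A) (x y : XY) (R : S → S → Prop) : Prop :=
  (∀ s t, R s t → R t s) ∧
  ∀ s t a s', R s t → L.Trans s a s' →
    (a = L.tau ∧ R s' t) ∨
    ∃ t1 t2 t', L.GenTauStar x R s t t1 ∧ L.Trans t1 a t2 ∧
      L.GenTauStar y R s' t2 t' ∧ R s' t'

/-- `(x,y)`-generic bisimilarity `≈_{(x,y)}`. -/
def GenBisimilar (L : LTS S A) (x y : XY) (s t : S) : Prop :=
  ∃ R, L.IsGenBisim x y R ∧ R s t

/-- A symmetric relation `R` is an `(x,y)`-generic bisimulation with explicit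
divergence (divergence condition D₄). -/
def IsGenBisimED (L : LTS S A) (x y : XY) (R : S → S → Prop) : Prop :=
  L.IsGenBisim x y R ∧
  ∀ s t, R s t → ∀ f : ℕ → S, f 0 = s → (∀ i, L.TauStep (f i) (f (i + 1))) →
    ∃ t' k, L.TauPlus t t' ∧ R (f k) t'

/-- `(x,y)`-generic bisimilarity with explicit divergence `≈ed_{(x,y)}`. -/
def GenBisimilarED (L : LTS S A) (x y : XY) (s t : S) : Prop :=
  ∃ R, L.IsGenBisimED x y R ∧ R s t

end LTS

/-- A relation `R` has the stuttering property: whenever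
`t₀ →τ t₁ →τ ⋯ →τ t_k` and `t₀ R t_k`, then `t_i R t_j` for all `0 ≤ i,j ≤ k`. -/
def StutteringProperty {S : Type u} {A : Type v} (L : LTS S A) (R : S → S → Prop) : Prop :=
  ∀ (k : ℕ) (t : ℕ → S),
    (∀ i < k, L.TauStep (t i) (t (i + 1))) → R (t 0) (t k) →
    ∀ i j, i ≤ k → j ≤ k → R (t i) (t j)

/-! ## Two-player games

A play is a maximal (finite or infinite) sequence of configurations connected by
moves, represented as `π : ℕ → Option C` which is `none` from the point (if any)
where the play has ended; a play may only end in a configuration whose owner is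
stuck. A strategy for a player is a (positional) function `σ : C → C` which is
required to pick a legal move at every configuration owned by that player admitting
at least one move; a play is consistent with `σ` if every move taken from a
configuration owned by that player follows `σ`. -/

section Games

variable {C : Type u}

/-- `π` is a maximal play of the game with move relation `move`. -/
def IsPlay (move : C → C → Prop) (π : ℕ → Option C) : Prop :=
  (∀ i c d, π i = some c → π (i + 1) = some d → move c d) ∧
  (∀ i c, π i = some c → π (i + 1) = none → ∀ d, ¬ move c d) ∧
  (∀ i, π i = none → π (i + 1) = none)

/-- The play `π` is consistent with strategy `σ` of the player owning the
configurations satisfying `owned`. -/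
def ConsistentWith (owned : C → Prop) (σ : C → C) (π : ℕ → Option C) : Prop :=
  ∀ i c d, π i = some c → owned c → π (i + 1) = some d → d = σ c

/-- `σ` is a valid strategy for the player owning the configurations satisfying
`owned`: it picks a legal move wherever a move exists. -/
def ValidStrategy (owned : C → Prop) (move : C → C → Prop) (σ : C → C) : Prop :=
  ∀ c, owned c → (∃ d, move c d) → move c (σ c)

/-- The play `π` is finite and ends in the configuration `c`. -/
def EndsAt (π : ℕ → Option C) (c : C) : Prop := ∃ i, π i = some c ∧ π (i + 1) = none

/-- The play `π` is infinite. -/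
def InfinitePlay (π : ℕ → Option C) : Prop := ∀ i, π i ≠ none

/-- The Büchi winning condition on infinite plays: the play passes through
infinitely many configurations carrying a `✓` reward. -/
def BuchiWin (reward : C → Prop) (π : ℕ → Option C) : Prop :=
  ∀ n, ∃ i, n ≤ i ∧ ∃ c, π i = some c ∧ reward c

/-- Duplicator wins the play `π`: either the play is finite and Spoiler is stuck,
or the play is infinite and satisfies the winning condition `infWin`. -/
def DupWinsPlay (dupOwned : C → Prop) (infWin : (ℕ → Option C) → Prop)
    (π : ℕ → Option C) : Prop :=
  (∃ c, EndsAt π c ∧ ¬ dupOwned c) ∨ (InfinitePlay π ∧ infWin π)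

/-- Spoiler wins the play `π` (all plays not won by Duplicator). -/
def SpWinsPlay (dupOwned : C → Prop) (infWin : (ℕ → Option C) → Prop)
    (π : ℕ → Option C) : Prop :=
  (∃ c, EndsAt π c ∧ dupOwned c) ∨ (InfinitePlay π ∧ ¬ infWin π)

/-- Duplicator wins the configuration `c`: she has a strategy winning all plays
starting in `c`. -/
def DupWins (dupOwned : C → Prop) (move : C → C → Prop)
    (infWin : (ℕ → Option C) → Prop) (c : C) : Prop :=
  ∃ σ : C → C, ValidStrategy dupOwned move σ ∧
    ∀ π, IsPlay move π → π 0 = some c → ConsistentWith dupOwned σ π →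
      DupWinsPlay dupOwned infWin π

/-- Spoiler wins the configuration `c`: he has a strategy winning all plays
starting in `c`. -/
def SpWins (dupOwned : C → Prop) (move : C → C → Prop)
    (infWin : (ℕ → Option C) → Prop) (c : C) : Prop :=
  ∃ σ : C → C, ValidStrategy (fun d => ¬ dupOwned d) move σ ∧
    ∀ π, IsPlay move π → π 0 = some c → ConsistentWith (fun d => ¬ dupOwned d) σ π →
      SpWinsPlay dupOwned infWin π

end Games

/-! ## The limited branching bisimulation (lbb) game -/

/-- Configurations of the lbb game: Spoiler-owned `⟨(s,t)⟩` and Duplicator-owned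
`⟨(s,t),(a,s')⟩`. -/
inductive LConf (S : Type u) (A : Type v)
  | sp (p : S × S)
  | dup (p : S × S) (c : A × S)

/-- Ownership in the lbb game. -/
def LConf.dupOwned {S : Type u} {A : Type v} : LConf S A → Prop
  | .sp _ => False
  | .dup _ _ => True

/-- Moves of the lbb game. -/
inductive LMove {S : Type u} {A : Type v} (L : LTS S A) : LConf S A → LConf S A → Prop
  | sp1 {s t a s'} (h : L.Trans s a s') :
      LMove L (LConf.sp (s, t)) (LConf.dup (s, t) (a, s'))
  | sp2 {s t a t'} (h : L.Trans t a t') :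
      LMove L (LConf.sp (s, t)) (LConf.dup (t, s) (a, t'))
  | dup1 {u v u'} :
      LMove L (LConf.dup (u, v) (L.tau, u')) (LConf.sp (u', v))
  | dup2 {u v a u' v'} (h : L.Trans v a v') :
      LMove L (LConf.dup (u, v) (a, u')) (LConf.sp (u', v'))
  | dup3 {u v a u' v'} (h : L.TauStep v v') :
      LMove L (LConf.dup (u, v) (a, u')) (LConf.sp (u, v'))

/-- `s ≡lb t`: Duplicator wins the lbb game from `⟨(s,t)⟩_S`; finite plays are won
by Duplicator iff Spoiler is stuck, and all infinite plays are won by Duplicator. -/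
def LTS.lbbEquiv {S : Type u} {A : Type v} (L : LTS S A) (s t : S) : Prop :=
  DupWins LConf.dupOwned (LMove L) (fun _ => True) (LConf.sp (s, t))

/-! ## The branching bisimulation (bb) game -/

/-- Configurations of the bb game: `⟨(s,t),c,r⟩` owned by Spoiler or Duplicator,
with challenge `c ∈ (A × S) ∪ {†}` (where `none` is `†`) and reward `r`. -/
inductive BConf (S : Type u) (A : Type v)
  | sp (p : S × S) (c : Option (A × S)) (r : Rw)
  | dup (p : S × S) (c : Option (A × S)) (r : Rw)

/-- Ownership in the bb game. -/
def BConf.dupOwned {S : Type u} {A : Type v} : BConf S A → Prop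
  | .sp _ _ _ => False
  | .dup _ _ _ => True

/-- The configuration carries a `✓` reward. -/
def BConf.reward {S : Type u} {A : Type v} : BConf S A → Prop
  | .sp _ _ r => r = Rw.check
  | .dup _ _ r => r = Rw.check

/-- Moves of the bb game. -/
inductive BMove {S : Type u} {A : Type v} (L : LTS S A) : BConf S A → BConf S A → Prop
  | sp1star {s t c r a s'} (h : L.Trans s a s') (hc : c = some (a, s') ∨ c = none) :
      BMove L (BConf.sp (s, t) c r) (BConf.dup (s, t) (some (a, s')) Rw.star)
  | sp1check {s t c r a s'} (h : L.Trans s a s')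
      (hc : ¬(c = some (a, s') ∨ c = none)) :
      BMove L (BConf.sp (s, t) c r) (BConf.dup (s, t) (some (a, s')) Rw.check)
  | sp2 {s t c r a t'} (h : L.Trans t a t') :
      BMove L (BConf.sp (s, t) c r) (BConf.dup (t, s) (some (a, t')) Rw.check)
  | dup1 {u v u' r} :
      BMove L (BConf.dup (u, v) (some (L.tau, u')) r) (BConf.sp (u', v) none Rw.check)
  | dup2 {u v a u' v' r} (h : L.Trans v a v') :
      BMove L (BConf.dup (u, v) (some (a, u')) r) (BConf.sp (u', v') none Rw.check)
  | dup3 {u v a u' v' r} (h : L.TauStep v v') :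
      BMove L (BConf.dup (u, v) (some (a, u')) r)
        (BConf.sp (u, v') (some (a, u')) Rw.star)

/-- `s ≡b t`: Duplicator wins the bb game from `⟨(s,t),†,*⟩_S`, where infinite
plays are won by Duplicator iff they yield infinitely many `✓` rewards. -/
def LTS.bbEquiv {S : Type u} {A : Type v} (L : LTS S A) (s t : S) : Prop :=
  DupWins BConf.dupOwned (BMove L) (BuchiWin BConf.reward) (BConf.sp (s, t) none Rw.star)

/-! ## The generic bisimulation (gb) game, and its explicit-divergence variant -/

/-- Configurations of the generic games: `⟨(s,t),c,m,r⟩` owned by Spoiler or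
Duplicator, with challenge `c ∈ (A × S) ∪ {†}`, partial match
`m ∈ (S × {☹,☺}) ∪ {†}` and reward `r`. -/
inductive GConf (S : Type u) (A : Type v)
  | sp (p : S × S) (c : Option (A × S)) (m : Option (S × Face)) (r : Rw)
  | dup (p : S × S) (c : Option (A × S)) (m : Option (S × Face)) (r : Rw)

/-- Ownership in the generic games. -/
def GConf.dupOwned {S : Type u} {A : Type v} : GConf S A → Prop
  | .sp _ _ _ _ => False
  | .dup _ _ _ _ => True

/-- The configuration carries a `✓` reward. -/
def GConf.reward {S : Type u} {A : Type v} : GConf S A → Prop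
  | .sp _ _ _ r => r = Rw.check
  | .dup _ _ _ r => r = Rw.check

/-- Moves of the `E`-generic bisimulation game. The parameter `rw1` is the reward
handed out by Duplicator's rule (1): `✓` in the gb game, `*` in the gbed game. -/
inductive GMove {S : Type u} {A : Type v} (L : LTS S A) (E : Set Face) (rw1 : Rw) :
    GConf S A → GConf S A → Prop
  | sp1 {s t c m r} (hc : c ≠ none) :
      GMove L E rw1 (GConf.sp (s, t) c m r) (GConf.dup (s, t) c m Rw.star)
  | sp2a {s t m r a s'} (h : L.Trans s a s') :
      GMove L E rw1 (GConf.sp (s, t) none m r)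
        (GConf.dup (s, t) (some (a, s')) (some (t, Face.frown)) Rw.star)
  | sp2b {s t c m r a s'} (h : L.Trans s a s') (hc : c ≠ some (a, s')) :
      GMove L E rw1 (GConf.sp (s, t) c m r)
        (GConf.dup (s, t) (some (a, s')) (some (t, Face.frown)) Rw.check)
  | sp3 {s t c m r a t'} (h : L.Trans t a t') :
      GMove L E rw1 (GConf.sp (s, t) c m r)
        (GConf.dup (t, s) (some (a, t')) (some (s, Face.frown)) Rw.check)
  | dup1 {u v u' vb f r} :
      GMove L E rw1 (GConf.dup (u, v) (some (L.tau, u')) (some (vb, f)) r)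
        (GConf.sp (u', vb) none none rw1)
  | dup2a {u v a u' vb v' r} (h : L.Trans vb a v') :
      GMove L E rw1 (GConf.dup (u, v) (some (a, u')) (some (vb, Face.frown)) r)
        (GConf.sp (u', v') (some (a, u')) (some (v', Face.smile)) Rw.star)
  | dup2b {u v a u' vb v' r} (h : L.Trans vb a v') :
      GMove L E rw1 (GConf.dup (u, v) (some (a, u')) (some (vb, Face.frown)) r)
        (GConf.sp (u', v') none none Rw.check)
  | dup2c {u v a u' vb v' r} (h : L.Trans vb a v') (hE : Face.smile ∈ E) :
      GMove L E rw1 (GConf.dup (u, v) (some (a, u')) (some (vb, Face.frown)) r)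
        (GConf.sp (u, v) (some (a, u')) (some (v', Face.smile)) Rw.star)
  | dup3a {u v a u' vb f v' r} (h : L.TauStep vb v') :
      GMove L E rw1 (GConf.dup (u, v) (some (a, u')) (some (vb, f)) r)
        (GConf.sp (u, v') (some (a, u')) (some (v', f)) Rw.star)
  | dup3b {u v a u' vb v' r} (h : L.TauStep vb v') :
      GMove L E rw1 (GConf.dup (u, v) (some (a, u')) (some (vb, Face.smile)) r)
        (GConf.sp (u', v') none none Rw.check)
  | dup3c {u v a u' vb f v' r} (h : L.TauStep vb v') (hE : f ∈ E) :
      GMove L E rw1 (GConf.dup (u, v) (some (a, u')) (some (vb, f)) r)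
        (GConf.sp (u, v) (some (a, u')) (some (v', f)) Rw.star)

/-- `E(x,y) ⊆ {☹,☺}`: the smallest set containing `☹` when `x = o` and `☺` when
`y = o`. -/
def Exy (x y : XY) : Set Face :=
  {f | (f = Face.frown ∧ x = XY.o) ∨ (f = Face.smile ∧ y = XY.o)}

/-- `s ≡_E t`: Duplicator wins the `E`-generic bisimulation game from
`⟨(s,t),†,†,*⟩_S`; infinite plays are won by Duplicator iff they yield infinitely
many `✓` rewards. -/
def LTS.gbEquiv {S : Type u} {A : Type v} (L : LTS S A) (E : Set Face) (s t : S) : Prop :=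
  DupWins GConf.dupOwned (GMove L E Rw.check) (BuchiWin GConf.reward)
    (GConf.sp (s, t) none none Rw.star)

/-- `s ≡ed_E t`: Duplicator wins the `E`-generic bisimulation with explicit
divergence game from `⟨(s,t),†,†,*⟩_S`. -/
def LTS.gbedEquiv {S : Type u} {A : Type v} (L : LTS S A) (E : Set Face) (s t : S) : Prop :=
  DupWins GConf.dupOwned (GMove L E Rw.star) (BuchiWin GConf.reward)
    (GConf.sp (s, t) none none Rw.star)

/-- The abstraction function `f(⟨(s,t),c,m,r⟩) = ⟨(s,t),c,r⟩` from configurations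
of the generic game to configurations of the bb game, preserving ownership. -/
def fabs {S : Type u} {A : Type v} : GConf S A → BConf S A
  | .sp p c _ r => .sp p c r
  | .dup p c _ r => .dup p c r




open Relation

attribute [local instance] Classical.propDecidable

section Paths
variable {S : Type u} {r : S → S → Prop}

/-- Indexed finite path of length `n` for relation `r`. -/
def IPath (r : S → S → Prop) (n : ℕ) (a b : S) : Prop :=
  ∃ c : ℕ → S, c 0 = a ∧ c n = b ∧ ∀ l < n, r (c l) (c (l + 1))

theorem IPath.refl (a : S) : IPath r 0 a a :=
  ⟨fun _ => a, rfl, rfl, fun l hl => absurd hl (Nat.not_lt_zero l)⟩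

theorem IPath.head {a a' b : S} (h : r a a') {n : ℕ} (hp : IPath r n a' b) :
    IPath r (n + 1) a b := by
  obtain ⟨c, h0, hn, hs⟩ := hp
  refine ⟨fun m => match m with | 0 => a | m + 1 => c m, rfl, hn, ?_⟩
  intro l hl
  match l with
  | 0 => simpa [h0] using h
  | l + 1 => exact hs l (by omega)

theorem IPath.to_reflTransGen {n : ℕ} {a b : S} (hp : IPath r n a b) :
    Relation.ReflTransGen r a b := by
  induction n generalizing a with
  | zero => obtain ⟨c, h0, hn, _⟩ := hp; rw [← h0, hn]
  | succ n ih =>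
    obtain ⟨c, h0, hn, hs⟩ := hp
    exact Relation.ReflTransGen.head (h0 ▸ hs 0 (Nat.succ_pos n))
      (ih ⟨fun m => c (m + 1), rfl, hn, fun l hl => hs (l + 1) (by omega)⟩)

theorem reflTransGen_iff_iPath {a b : S} :
    Relation.ReflTransGen r a b ↔ ∃ n, IPath r n a b := by
  constructor
  · intro h
    induction h using Relation.ReflTransGen.head_induction_on with
    | refl => exact ⟨0, IPath.refl b⟩
    | head h' _ ih => obtain ⟨n, hp⟩ := ih; exact ⟨n + 1, hp.head h'⟩
  · rintro ⟨n, hp⟩; exact hp.to_reflTransGen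

theorem IPath.tail_path {n : ℕ} {a b : S} (hp : IPath r (n + 1) a b) :
    ∃ a', r a a' ∧ IPath r n a' b := by
  obtain ⟨c, h0, hn, hs⟩ := hp
  exact ⟨c 1, h0 ▸ hs 0 (Nat.succ_pos n),
    ⟨fun m => c (m + 1), rfl, hn, fun l hl => hs (l + 1) (by omega)⟩⟩

theorem transGen_iff_iPath {a b : S} :
    Relation.TransGen r a b ↔ ∃ n, 1 ≤ n ∧ IPath r n a b := by
  constructor
  · intro h
    obtain ⟨c, hac, hcb⟩ : ∃ c, r a c ∧ Relation.ReflTransGen r c b := by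
      induction h using Relation.TransGen.head_induction_on with
      | single h => exact ⟨_, h, Relation.ReflTransGen.refl⟩
      | head h' htl _ => exact ⟨_, h', htl.to_reflTransGen⟩
    obtain ⟨n, hp⟩ := reflTransGen_iff_iPath.mp hcb
    exact ⟨n + 1, by omega, hp.head hac⟩
  · rintro ⟨n, hn, hp⟩
    obtain ⟨n, rfl⟩ : ∃ m, n = m + 1 := ⟨n - 1, by omega⟩
    obtain ⟨a', ha, hp'⟩ := hp.tail_path
    exact Relation.TransGen.head' ha hp'.to_reflTransGen

theorem IPath.mono {r' : S → S → Prop} (hmono : ∀ {u v}, r u v → r' u v)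
    {n : ℕ} {a b : S} (hp : IPath r n a b) : IPath r' n a b := by
  obtain ⟨c, h0, hn, hs⟩ := hp
  exact ⟨c, h0, hn, fun l hl => hmono (hs l hl)⟩

end Paths

section Game
variable {S : Type u} {A : Type v}
variable (L : LTS S A) (x y : XY) (W : S → S → Prop)

/-- step of a related τ-path (x-leg) -/
def SStep (s u u' : S) : Prop := L.TauStep u u' ∧ (x = XY.b → W s u')

/-- y-leg completion condition -/
def YDone (u' t2 : S) : Prop :=
  W u' t2 ∨ (Face.smile ∈ Exy x y ∧ ∃ t', L.TauPlus t2 t' ∧ W u' t')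

/-- Duplicator can really match the challenge `u →a u'` from `v̄`. -/
def RealP (u : S) (a : A) (u' vb : S) : Prop :=
  ∃ t1 t2, Relation.ReflTransGen (SStep L x W u) vb t1 ∧ L.Trans t1 a t2 ∧
    YDone L x y W u' t2

def SizedS (u' vb : S) (m : ℕ) : Prop :=
  1 ≤ m ∧ ∃ t', IPath L.TauStep m vb t' ∧ W u' t'

def RealSized (u : S) (a : A) (u' vb : S) (k : ℕ) : Prop :=
  ∃ n m t1 t2, IPath (SStep L x W u) n vb t1 ∧ L.Trans t1 a t2 ∧
    ((m = 0 ∧ W u' t2) ∨ (Face.smile ∈ Exy x y ∧ SizedS L W u' t2 m)) ∧ k = n + m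

theorem realP_iff_sized {u : S} {a : A} {u' vb : S} :
    RealP L x y W u a u' vb ↔ ∃ k, RealSized L x y W u a u' vb k := by
  constructor
  · rintro ⟨t1, t2, hpath, htr, hy⟩
    obtain ⟨n, hp⟩ := reflTransGen_iff_iPath.mp hpath
    rcases hy with hW | ⟨hsm, t', hTP, hW⟩
    · exact ⟨n + 0, n, 0, t1, t2, hp, htr, Or.inl ⟨rfl, hW⟩, rfl⟩
    · obtain ⟨m, hm1, hq⟩ := transGen_iff_iPath.mp hTP
      exact ⟨n + m, n, m, t1, t2, hp, htr, Or.inr ⟨hsm, hm1, t', hq, hW⟩, rfl⟩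
  · rintro ⟨k, n, m, t1, t2, hp, htr, hy, rfl⟩
    refine ⟨t1, t2, hp.to_reflTransGen, htr, ?_⟩
    rcases hy with ⟨_, hW⟩ | ⟨hsm, hm1, t', hq, hW⟩
    · exact Or.inl hW
    · exact Or.inr ⟨hsm, t', transGen_iff_iPath.mpr ⟨m, hm1, hq⟩, hW⟩

/-- invariant of a ☹-configuration -/
def GF (u v : S) (a : A) (u' vb : S) : Prop :=
  W u v ∧ L.Trans u a u' ∧ (x = XY.b → vb = v) ∧
    (RealP L x y W u a u' vb ∨ (a = L.tau ∧ W u' vb ∧ vb = v))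

/-- invariant of a ☺-configuration -/
def GS (u v : S) (u' vb : S) : Prop :=
  W u v ∧ Face.smile ∈ Exy x y ∧ ∃ t', L.TauPlus vb t' ∧ W u' t'

def GoodM (u v : S) (a : A) (u' vb : S) : Face → Prop
  | Face.frown => GF L x y W u v a u' vb
  | Face.smile => GS L x y W u v u' vb

/-- invariant at Spoiler-owned configurations -/
def GoodC : S × S → Option (A × S) → Option (S × Face) → Prop
  | (u, v), none, none => W u v
  | (u, v), some (a, u'), some (vb, f) => GoodM L x y W u v a u' vb f
  | _, _, _ => False

/-- invariant at Duplicator-owned configurations -/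
def GoodD : S × S → Option (A × S) → Option (S × Face) → Prop
  | (u, v), some (a, u'), some (vb, f) => GoodM L x y W u v a u' vb f
  | _, _, _ => False

def Good : GConf S A → Prop
  | .sp p c m _ => GoodC L x y W p c m
  | .dup p c m _ => GoodD L x y W p c m

def Walk : GConf S A → Prop
  | .sp (u, _) (some (a, u')) (some (vb, f)) _ => f = Face.smile ∨ RealP L x y W u a u' vb
  | .dup (u, _) (some (a, u')) (some (vb, f)) _ => f = Face.smile ∨ RealP L x y W u a u' vb
  | _ => False

noncomputable def rF (u : S) (a : A) (u' vb : S) : ℕ :=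
  if h : ∃ k, RealSized L x y W u a u' vb k then Nat.find h + 1 else 0

noncomputable def rS (u' vb : S) : ℕ :=
  if h : ∃ m, SizedS L W u' vb m then Nat.find h else 0

noncomputable def rankC : S × S → Option (A × S) → Option (S × Face) → ℕ
  | (u, _), some (a, u'), some (vb, Face.frown) => 2 * rF L x y W u a u' vb
  | (_, _), some (_, u'), some (vb, Face.smile) => 2 * rS L W u' vb
  | _, _, _ => 0

noncomputable def rank : GConf S A → ℕ
  | .sp p c m _ => rankC L x y W p c m + 1
  | .dup p c m _ => rankC L x y W p c m

end Game

section Game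
variable {S : Type u} {A : Type v}
variable (L : LTS S A) (x y : XY) (W : S → S → Prop)

def PostCore : GConf S A → GConf S A → Prop
  | .dup (u, _) (some (a, u')) (some (vb, Face.frown)) _, d =>
      (¬ RealP L x y W u a u' vb ∧ d = GConf.sp (u', vb) none none Rw.star) ∨
      (RealP L x y W u a u' vb ∧ Good L x y W d ∧
        (GConf.reward d ∨ (Walk L x y W d ∧ rank L x y W d < 2 * rF L x y W u a u' vb)))
  | .dup (_, _) (some (_, u')) (some (vb, Face.smile)) _, d =>
      Good L x y W d ∧
        (GConf.reward d ∨ (Walk L x y W d ∧ rank L x y W d < 2 * rS L W u' vb))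
  | _, _ => True

def Plan (c d : GConf S A) : Prop :=
  GMove L (Exy x y) Rw.star c d ∧ (Good L x y W c → PostCore L x y W c d)

noncomputable def sigma : GConf S A → GConf S A := fun c =>
  if h : ∃ d, Plan L x y W c d then Classical.choose h
  else if h2 : ∃ d, GMove L (Exy x y) Rw.star c d then Classical.choose h2 else c

theorem sigma_valid :
    ValidStrategy GConf.dupOwned (GMove L (Exy x y) Rw.star) (sigma L x y W) := by
  intro c _ hmv
  unfold sigma
  by_cases h : ∃ d, Plan L x y W c d
  · rw [dif_pos h]; exact (Classical.choose_spec h).1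
  · rw [dif_neg h, dif_pos hmv]; exact Classical.choose_spec hmv

theorem rF_eq {u : S} {a : A} {u' vb : S} (h : ∃ k, RealSized L x y W u a u' vb k) :
    rF L x y W u a u' vb = Nat.find h + 1 := by
  rw [rF, dif_pos h]

theorem rF_le {u : S} {a : A} {u' vb : S} {k : ℕ} (h : RealSized L x y W u a u' vb k) :
    rF L x y W u a u' vb ≤ k + 1 := by
  rw [rF_eq L x y W ⟨k, h⟩]
  exact Nat.add_le_add_right (Nat.find_min' _ h) 1

theorem rS_eq {u' vb : S} (h : ∃ m, SizedS L W u' vb m) :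
    rS L W u' vb = Nat.find h := by
  rw [rS, dif_pos h]

theorem rS_le {u' vb : S} {m : ℕ} (h : SizedS L W u' vb m) :
    rS L W u' vb ≤ m := by
  rw [rS_eq L W ⟨m, h⟩]
  exact Nat.find_min' _ h

theorem frown_mem_Exy (hx : x = XY.o) : Face.frown ∈ Exy x y := Or.inl ⟨rfl, hx⟩

/-- Existence of a planned move at every good Duplicator configuration. -/
theorem plan_exists {u v : S} {a : A} {u' vb : S} {f : Face} {r : Rw}
    (hG : Good L x y W (GConf.dup (u, v) (some (a, u')) (some (vb, f)) r)) :
    ∃ d, Plan L x y W (GConf.dup (u, v) (some (a, u')) (some (vb, f)) r) d := by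
  cases f with
  | frown =>
    obtain ⟨hWuv, htru, hxbv, hdisj⟩ : GF L x y W u v a u' vb := hG
    by_cases hR : RealP L x y W u a u' vb
    · have hk : ∃ k, RealSized L x y W u a u' vb k := (realP_iff_sized L x y W).mp hR
      have hspec := Nat.find_spec hk
      obtain ⟨n, m, t1, t2, hpath, htr, hy, hknm⟩ := hspec
      have hrF : rF L x y W u a u' vb = Nat.find hk + 1 := rF_eq L x y W hk
      cases n with
      | zero =>
        have ht1 : t1 = vb := by
          obtain ⟨c, h0, hn, _⟩ := hpath; rw [← hn, h0]
        subst ht1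
        rcases hy with ⟨hm0, hW2⟩ | ⟨hsm, hSS⟩
        · refine ⟨GConf.sp (u', t2) none none Rw.check, GMove.dup2b htr, fun _ => ?_⟩
          exact Or.inr ⟨hR, hW2, Or.inl rfl⟩
        · refine ⟨GConf.sp (u, v) (some (a, u')) (some (t2, Face.smile)) Rw.star,
            GMove.dup2c htr hsm, fun _ => ?_⟩
          refine Or.inr ⟨hR, ?_, Or.inr ⟨Or.inl rfl, ?_⟩⟩
          · obtain ⟨hm1, t', hip, hWt'⟩ := hSS
            exact ⟨hWuv, hsm, t', transGen_iff_iPath.mpr ⟨m, hm1, hip⟩, hWt'⟩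
          · have h1 : rS L W u' t2 ≤ m := rS_le L W hSS
            have h2 : rank L x y W (GConf.sp (u, v) (some (a, u')) (some (t2, Face.smile)) Rw.star)
                = 2 * rS L W u' t2 + 1 := rfl
            omega
      | succ n' =>
        obtain ⟨w, hstep, htail⟩ := hpath.tail_path
        have hRw : RealSized L x y W u a u' w (n' + m) := ⟨n', m, t1, t2, htail, htr, hy, rfl⟩
        have hRPw : RealP L x y W u a u' w := (realP_iff_sized L x y W).mpr ⟨_, hRw⟩
        have hrkw : 2 * rF L x y W u a u' w + 1 < 2 * rF L x y W u a u' vb := by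
          have h1 := rF_le L x y W hRw
          rw [hrF]
          omega
        cases hx : x with
        | o =>
          subst hx
          refine ⟨GConf.sp (u, v) (some (a, u')) (some (w, Face.frown)) Rw.star,
            GMove.dup3c hstep.1 (frown_mem_Exy XY.o y rfl), fun _ => ?_⟩
          refine Or.inr ⟨hR, ⟨hWuv, htru, ?_, Or.inl hRPw⟩, Or.inr ⟨Or.inr hRPw, hrkw⟩⟩
          intro hxb; cases hxb
        | b =>
          subst hx
          refine ⟨GConf.sp (u, w) (some (a, u')) (some (w, Face.frown)) Rw.star,
            GMove.dup3a hstep.1, fun _ => ?_⟩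
          exact Or.inr ⟨hR, ⟨hstep.2 rfl, htru, fun _ => rfl, Or.inl hRPw⟩,
            Or.inr ⟨Or.inr hRPw, hrkw⟩⟩
    · obtain ⟨ha, hWt, hvv⟩ :
        a = L.tau ∧ W u' vb ∧ vb = v := hdisj.resolve_left hR
      subst ha
      exact ⟨GConf.sp (u', vb) none none Rw.star, GMove.dup1, fun _ => Or.inl ⟨hR, rfl⟩⟩
  | smile =>
    obtain ⟨hWuv, hsm, t', hTP, hWt'⟩ : GS L x y W u v u' vb := hG
    obtain ⟨m0, hm01, hip0⟩ := transGen_iff_iPath.mp hTP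
    have hms : ∃ m, SizedS L W u' vb m := ⟨m0, hm01, t', hip0, hWt'⟩
    have hspec := Nat.find_spec hms
    obtain ⟨hm1, t'', hip, hW''⟩ := hspec
    have hrS : rS L W u' vb = Nat.find hms := rS_eq L W hms
    obtain ⟨m', hm'⟩ : ∃ m', Nat.find hms = m' + 1 := ⟨Nat.find hms - 1, by omega⟩
    rw [hm'] at hip
    obtain ⟨w, hstep, htail⟩ := hip.tail_path
    cases m' with
    | zero =>
      have htw : t'' = w := by
        obtain ⟨c, h0, hn, _⟩ := htail; rw [← hn, h0]
      refine ⟨GConf.sp (u', w) none none Rw.check, GMove.dup3b hstep, fun _ => ?_⟩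
      exact ⟨htw ▸ hW'', Or.inl rfl⟩
    | succ m'' =>
      refine ⟨GConf.sp (u, v) (some (a, u')) (some (w, Face.smile)) Rw.star,
        GMove.dup3c hstep hsm, fun _ => ?_⟩
      refine ⟨⟨hWuv, hsm, t'', transGen_iff_iPath.mpr ⟨m'' + 1, by omega, htail⟩, hW''⟩,
        Or.inr ⟨Or.inl rfl, ?_⟩⟩
      have h1 : rS L W u' w ≤ m'' + 1 := rS_le L W ⟨by omega, t'', htail, hW''⟩
      have : rank L x y W (GConf.sp (u, v) (some (a, u')) (some (w, Face.smile)) Rw.star)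
          = 2 * rS L W u' w + 1 := rfl
      omega

end Game

section Game
variable {S : Type u} {A : Type v}
variable (L : LTS S A) (x y : XY) (W : S → S → Prop)

variable (hsymm : ∀ {p q : S}, W p q → W q p)
variable (htrans : ∀ {p q : S} {a : A} {p'}, W p q → L.Trans p a p' →
    (a = L.tau ∧ W p' q) ∨ RealP L x y W p a p' q)

theorem goodC_W {p : S × S} {c : Option (A × S)} {m : Option (S × Face)}
    (h : GoodC L x y W p c m) : W p.1 p.2 := by
  obtain ⟨u, v⟩ := p
  match c, m with
  | none, none => exact h
  | some (a, u'), some (vb, f) =>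
    cases f with
    | frown => exact (h : GF L x y W u v a u' vb).1
    | smile => exact (h : GS L x y W u v u' vb).1
  | none, some _ => exact absurd h (by simp [GoodC])
  | some (a, u'), none => exact absurd h (by simp [GoodC])

include htrans in
/-- a fresh ☹-configuration resulting from a new challenge is good -/
theorem fresh_good {s t : S} {a : A} {s' : S} (hW : W s t) (h : L.Trans s a s') :
    GoodD L x y W (s, t) (some (a, s')) (some (t, Face.frown)) := by
  show GF L x y W s t a s' t
  refine ⟨hW, h, fun _ => rfl, ?_⟩
  rcases htrans hW h with ⟨ha, hW'⟩ | hR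
  · exact Or.inr ⟨ha, hW', rfl⟩
  · exact Or.inl hR

include hsymm htrans in
/-- Spoiler moves preserve the invariant. -/
theorem spoiler_preserves {p : S × S} {c : Option (A × S)} {m : Option (S × Face)}
    {r : Rw} {d : GConf S A}
    (hG : Good L x y W (GConf.sp p c m r)) (hmv : GMove L (Exy x y) Rw.star (GConf.sp p c m r) d) :
    Good L x y W d := by
  have hW : W p.1 p.2 := goodC_W L x y W hG
  obtain ⟨u, v⟩ := p
  cases hmv with
  | sp1 hc =>
    rcases c with _ | ⟨a, u'⟩
    · exact absurd rfl hc
    rcases m with _ | ⟨vb, f⟩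
    · exact (hG : False).elim
    exact hG
  | @sp2a _ _ _ _ a s' h => exact fresh_good L x y W htrans hW h
  | @sp2b _ _ _ _ _ a s' h hc => exact fresh_good L x y W htrans hW h
  | @sp3 _ _ _ _ _ a t' h => exact fresh_good L x y W htrans (hsymm hW) h
  end Game

section Game
variable {S : Type u} {A : Type v}
variable (L : LTS S A) (x y : XY) (W : S → S → Prop)

theorem sigma_plan {c : GConf S A} (hG : Good L x y W c) (hd : c.dupOwned) :
    Plan L x y W c (sigma L x y W c) := by
  obtain ⟨⟨u, v⟩, cc, mm, r⟩ | ⟨⟨u, v⟩, cc, mm, r⟩ := c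
  · exact hd.elim
  rcases cc with _ | ⟨a, u'⟩
  · exact (hG : False).elim
  rcases mm with _ | ⟨vb, f⟩
  · exact (hG : False).elim
  have h := plan_exists L x y W hG
  show Plan L x y W _ (sigma L x y W _)
  rw [sigma, dif_pos h]
  exact Classical.choose_spec h

theorem dup_move_exists {c : GConf S A} (hG : Good L x y W c) (hd : c.dupOwned) :
    ∃ d, GMove L (Exy x y) Rw.star c d := by
  obtain ⟨⟨u, v⟩, cc, mm, r⟩ | ⟨⟨u, v⟩, cc, mm, r⟩ := c
  · exact hd.elim
  rcases cc with _ | ⟨a, u'⟩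
  · exact (hG : False).elim
  rcases mm with _ | ⟨vb, f⟩
  · exact (hG : False).elim
  obtain ⟨d, hp⟩ := plan_exists L x y W hG
  exact ⟨d, hp.1⟩

theorem post_good {c d : GConf S A} (hG : Good L x y W c) (hd : c.dupOwned)
    (hp : PostCore L x y W c d) : Good L x y W d := by
  obtain ⟨⟨u, v⟩, cc, mm, r⟩ | ⟨⟨u, v⟩, cc, mm, r⟩ := c
  · exact hd.elim
  rcases cc with _ | ⟨a, u'⟩
  · exact (hG : False).elim
  rcases mm with _ | ⟨vb, f⟩
  · exact (hG : False).elim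
  cases f with
  | frown =>
    rcases hp with ⟨hnR, rfl⟩ | ⟨_, hGd, _⟩
    · obtain ⟨hW, htru, hxv, hdisj⟩ : GF L x y W u v a u' vb := hG
      obtain ⟨_, hWt, _⟩ := hdisj.resolve_left hnR
      exact hWt
    · exact hGd
  | smile => exact hp.1

end Game

section Game
variable {S : Type u} {A : Type v}
variable (L : LTS S A) (x y : XY) (W : S → S → Prop)

variable (hsymm : ∀ {p q : S}, W p q → W q p)
variable (htrans : ∀ {p q : S} {a : A} {p'}, W p q → L.Trans p a p' →
    (a = L.tau ∧ W p' q) ∨ RealP L x y W p a p' q)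
variable (hdiv : ∀ {t : S} (f : ℕ → S), (∀ i, L.TauStep (f i) (f (i + 1))) →
    (∀ i, W (f i) t) → ∃ k, RealP L x y W (f k) L.tau (f (k + 1)) t)

include hsymm htrans hdiv in
theorem game_win {s t : S} (hst : W s t) : L.gbedEquiv (Exy x y) s t := by
  refine ⟨sigma L x y W, sigma_valid L x y W, ?_⟩
  intro π hplay h0 hcons
  -- the invariant holds all along the play
  have good_inv : ∀ i c, π i = some c → Good L x y W c := by
    intro i
    induction i with
    | zero =>
      intro c hc
      rw [h0] at hc
      cases hc
      exact hst
    | succ i ih =>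
      intro d hd
      obtain ⟨c, hc⟩ : ∃ c, π i = some c := by
        cases hπi : π i with
        | none => rw [hplay.2.2 i hπi] at hd; cases hd
        | some c => exact ⟨c, rfl⟩
      have hmv := hplay.1 i c d hc hd
      have hGc := ih c hc
      obtain ⟨p, cc, mm, r⟩ | ⟨p, cc, mm, r⟩ := c
      · exact spoiler_preserves L x y W hsymm htrans hGc hmv
      · have hdd := hcons i _ d hc trivial hd
        subst hdd
        exact post_good L x y W hGc trivial ((sigma_plan L x y W hGc trivial).2 hGc)
  by_cases hInf : InfinitePlay π
  · right
    refine ⟨hInf, ?_⟩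
    by_contra hB
    unfold BuchiWin at hB
    push_neg at hB
    obtain ⟨N, hN⟩ := hB
    have hsome : ∀ i, ∃ c, π i = some c := by
      intro i
      cases hπi : π i with
      | none => exact absurd hπi (hInf i)
      | some c => exact ⟨c, rfl⟩
    -- no walking configuration can occur after N
    have descent : ∀ k i c, N ≤ i → π i = some c → Walk L x y W c →
        rank L x y W c = k → False := by
      intro k
      induction k using Nat.strong_induction_on with
      | _ k IH =>
      intro i c hNi hic hwalk hrk
      have hGc := good_inv i c hic
      obtain ⟨d, hd⟩ := hsome (i + 1)
      have hrewd : ¬ GConf.reward d := hN (i + 1) (by omega) d hd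
      obtain ⟨⟨u, v⟩, cc, mm, r⟩ | ⟨⟨u, v⟩, cc, mm, r⟩ := c
      · -- Spoiler-owned
        rcases cc with _ | ⟨a, u'⟩
        · exact (hwalk : False)
        rcases mm with _ | ⟨vb, f⟩
        · exact (hwalk : False)
        have hmv := hplay.1 i _ d hic hd
        cases hmv with
        | sp1 hc =>
          exact IH (rank L x y W (GConf.dup (u, v) (some (a, u')) (some (vb, f)) Rw.star))
            (by rw [← hrk]; exact Nat.lt_succ_self _) (i + 1) _ (by omega) hd hwalk rfl
        | sp2b h hc => exact hrewd rfl
        | sp3 h => exact hrewd rfl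
      · -- Duplicator-owned
        rcases cc with _ | ⟨a, u'⟩
        · exact (hwalk : False)
        rcases mm with _ | ⟨vb, f⟩
        · exact (hwalk : False)
        have hdd := hcons i _ d hic trivial hd
        subst hdd
        have hpost := (sigma_plan L x y W hGc trivial).2 hGc
        cases f with
        | frown =>
          have hR : RealP L x y W u a u' vb := by
            rcases hwalk with hsm | hR
            · cases hsm
            · exact hR
          rcases hpost with ⟨hnR, _⟩ | ⟨_, hGd, hrew | ⟨hwd, hlt⟩⟩
          · exact hnR hR
          · exact hrewd hrew
          · have hrkc : rank L x y W
                (GConf.dup (u, v) (some (a, u')) (some (vb, Face.frown)) r)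
                = 2 * rF L x y W u a u' vb := rfl
            exact IH (rank L x y W (sigma L x y W _)) (by omega)
              (i + 1) _ (by omega) hd hwd rfl
        | smile =>
          rcases hpost with ⟨hGd, hrew | ⟨hwd, hlt⟩⟩
          · exact hrewd hrew
          · have hrkc : rank L x y W
                (GConf.dup (u, v) (some (a, u')) (some (vb, Face.smile)) r)
                = 2 * rS L W u' vb := rfl
            exact IH (rank L x y W (sigma L x y W _)) (by omega)
              (i + 1) _ (by omega) hd hwd rfl
    -- a good, non-walking Duplicator configuration is answered silently
    have dup_silent : ∀ i u v a u' vb f r, N ≤ i →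
        π i = some (GConf.dup (u, v) (some (a, u')) (some (vb, f)) r) →
        a = L.tau ∧ W u' vb ∧ ¬ RealP L x y W u a u' vb ∧
          π (i + 1) = some (GConf.sp (u', vb) none none Rw.star) := by
      intro i u v a u' vb f r hNi hic
      have hGc := good_inv _ _ hic
      have hnW : ¬ Walk L x y W (GConf.dup (u, v) (some (a, u')) (some (vb, f)) r) :=
        fun hw => descent _ i _ hNi hic hw rfl
      have hf : f = Face.frown := by
        cases f
        · rfl
        · exact absurd (Or.inl rfl) hnW
      subst hf
      have hnR : ¬ RealP L x y W u a u' vb := fun hR => hnW (Or.inr hR)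
      have hGFc : GF L x y W u v a u' vb := hGc
      obtain ⟨hWuv, htru, hxv, hdisj⟩ := hGFc
      obtain ⟨ha, hWt, hvv⟩ := hdisj.resolve_left hnR
      obtain ⟨d, hd⟩ := hsome (i + 1)
      have hdd := hcons i _ d hic trivial hd
      subst hdd
      have hpost := (sigma_plan L x y W hGc trivial).2 hGc
      rcases hpost with ⟨_, hsig⟩ | ⟨hR, _⟩
      · exact ⟨ha, hWt, hnR, by rw [hd, hsig]⟩
      · exact absurd hR hnR
    -- from a † configuration, two steps of the play produce a τ-step
    have dagger_step : ∀ i u t₀ r', N ≤ i →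
        π i = some (GConf.sp (u, t₀) none none r') →
        ∃ s', L.TauStep u s' ∧ W s' t₀ ∧ ¬ RealP L x y W u L.tau s' t₀ ∧
          π (i + 2) = some (GConf.sp (s', t₀) none none Rw.star) := by
      intro i u t₀ r' hNi hic
      obtain ⟨d, hd⟩ := hsome (i + 1)
      have hrewd : ¬ GConf.reward d := hN (i + 1) (by omega) d hd
      have hmv := hplay.1 i _ d hic hd
      cases hmv with
      | sp1 hc => exact absurd rfl hc
      | @sp2a _ _ _ _ a s' h =>
        obtain ⟨ha, hWt, hnR, hnext⟩ := dup_silent (i + 1) u t₀ a s' t₀ Face.frown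
          Rw.star (by omega) hd
        subst ha
        exact ⟨s', h, hWt, hnR, hnext⟩
      | sp2b h hc => exact (hrewd rfl).elim
      | sp3 h => exact (hrewd rfl).elim
    -- find an initial † configuration after N
    have start : ∃ i₀ u₀ t₀ r₀, N ≤ i₀ ∧
        π i₀ = some (GConf.sp (u₀, t₀) none none r₀) := by
      obtain ⟨c, hc⟩ := hsome N
      have hGc := good_inv _ _ hc
      have hnW : ¬ Walk L x y W c := fun hw => descent _ N c (le_refl N) hc hw rfl
      obtain ⟨⟨u, v⟩, cc, mm, r⟩ | ⟨⟨u, v⟩, cc, mm, r⟩ := c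
      · rcases cc with _ | ⟨a, u'⟩
        · rcases mm with _ | ⟨vb, f⟩
          · exact ⟨N, u, v, r, le_refl N, hc⟩
          · exact (hGc : False).elim
        rcases mm with _ | ⟨vb, f⟩
        · exact (hGc : False).elim
        -- challenge Spoiler configuration: Spoiler must play sp1
        obtain ⟨d, hd⟩ := hsome (N + 1)
        have hrewd : ¬ GConf.reward d := hN (N + 1) (by omega) d hd
        have hmv := hplay.1 N _ d hc hd
        cases hmv with
        | sp1 hcc =>
          obtain ⟨_, _, _, hnext⟩ := dup_silent (N + 1) u v a u' vb f Rw.star (by omega) hd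
          exact ⟨N + 2, u', vb, Rw.star, by omega, hnext⟩
        | sp2b h hcc => exact (hrewd rfl).elim
        | sp3 h => exact (hrewd rfl).elim
      · rcases cc with _ | ⟨a, u'⟩
        · exact (hGc : False).elim
        rcases mm with _ | ⟨vb, f⟩
        · exact (hGc : False).elim
        obtain ⟨_, _, _, hnext⟩ := dup_silent N u v a u' vb f r (le_refl N) hc
        exact ⟨N + 1, u', vb, Rw.star, by omega, hnext⟩
    obtain ⟨i₀, u₀, t₀, r₀, hNi₀, hi₀⟩ := start
    have key : ∀ j : ℕ, ∃ u r', π (i₀ + 2 * j) = some (GConf.sp (u, t₀) none none r') := by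
      intro j
      induction j with
      | zero => exact ⟨u₀, r₀, by rw [show i₀ + 2 * 0 = i₀ from by omega]; exact hi₀⟩
      | succ j ih =>
        obtain ⟨u, r', hu⟩ := ih
        obtain ⟨s', _, _, _, hs⟩ := dagger_step (i₀ + 2 * j) u t₀ r' (by omega) hu
        exact ⟨s', Rw.star, by rw [show i₀ + 2 * (j + 1) = i₀ + 2 * j + 2 from by omega]; exact hs⟩
    let f : ℕ → S := fun j => Classical.choose (key j)
    have hf : ∀ j, ∃ r', π (i₀ + 2 * j) =
        some (GConf.sp (f j, t₀) none none r') := fun j =>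
      Classical.choose_spec (key j)
    have hWf : ∀ j, W (f j) t₀ := by
      intro j
      obtain ⟨r', hj⟩ := hf j
      exact good_inv _ _ hj
    have hstepf : ∀ j, L.TauStep (f j) (f (j + 1)) ∧
        ¬ RealP L x y W (f j) L.tau (f (j + 1)) t₀ := by
      intro j
      obtain ⟨r', hj⟩ := hf j
      obtain ⟨s', hts, hWs, hnR, hπ2⟩ := dagger_step (i₀ + 2 * j) (f j) t₀ r' (by omega) hj
      obtain ⟨r'', hj1⟩ := hf (j + 1)
      rw [show i₀ + 2 * (j + 1) = i₀ + 2 * j + 2 from by omega] at hj1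
      rw [hπ2] at hj1
      have he : f (j + 1) = s' := by
        simp only [Option.some.injEq, GConf.sp.injEq, Prod.mk.injEq] at hj1
        exact hj1.1.1.symm
      rw [he]
      exact ⟨hts, hnR⟩
    obtain ⟨k, hk⟩ := hdiv f (fun j => (hstepf j).1) hWf
    exact (hstepf k).2 hk
  · -- finite play: it must end in a Spoiler-owned configuration
    left
    unfold InfinitePlay at hInf
    push_neg at hInf
    have hex : ∃ i, π i = none := by
      obtain ⟨i, hi⟩ := hInf
      exact ⟨i, by simpa using hi⟩
    let i₁ := Nat.find hex
    have hi₁ : π i₁ = none := Nat.find_spec hex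
    have hi₁0 : i₁ ≠ 0 := by
      intro h
      rw [h, h0] at hi₁
      cases hi₁
    obtain ⟨i₂, hi₂⟩ : ∃ i₂, i₁ = i₂ + 1 := ⟨i₁ - 1, by omega⟩
    obtain ⟨c, hc⟩ : ∃ c, π i₂ = some c := by
      cases hπ : π i₂ with
      | none => exact absurd hπ (Nat.find_min hex (by omega))
      | some c => exact ⟨c, rfl⟩
    have hstuck : ∀ d, ¬ GMove L (Exy x y) Rw.star c d :=
      hplay.2.1 i₂ c hc (by rw [← hi₂]; exact hi₁)
    have hGc := good_inv i₂ c hc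
    refine ⟨c, ⟨i₂, hc, by rw [← hi₂]; exact hi₁⟩, ?_⟩
    intro hdup
    obtain ⟨d, hd⟩ := dup_move_exists L x y W hGc hdup
    exact hstuck d hd

end Game

section InstO
variable {S : Type u} {A : Type v}
variable (L : LTS S A) (y : XY) (W : S → S → Prop)

theorem iPath_prefix_last {r : S → S → Prop} {n : ℕ} {a b : S}
    (hp : IPath r (n + 1) a b) : ∃ p, IPath r n a p ∧ r p b := by
  obtain ⟨c, h0, hn, hs⟩ := hp
  exact ⟨c n, ⟨c, h0, rfl, fun l hl => hs l (by omega)⟩, hn ▸ hs n (by omega)⟩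

/-- Convert a plain τ-path ending in a transition into a `RealP` witness,
when `x = o` (no side conditions on the path). -/
theorem realP_of_tauPlus_o {u u' t t' : S}
    (hTP : L.TauPlus t t') (hW : W u' t') :
    RealP L XY.o y W u L.tau u' t := by
  obtain ⟨n, hn1, hp⟩ := transGen_iff_iPath.mp hTP
  obtain ⟨n', rfl⟩ : ∃ n', n = n' + 1 := ⟨n - 1, by omega⟩
  obtain ⟨p, hpre, hlast⟩ := iPath_prefix_last hp
  refine ⟨p, t', ?_, hlast, Or.inl hW⟩
  exact (hpre.mono (fun {a b} h => ⟨h, fun hxb => absurd hxb (by decide)⟩)).to_reflTransGen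

theorem yDone_of_genTauStar {s' t2 t' : S}
    (hgts : L.GenTauStar y W s' t2 t') (hW : W s' t') :
    YDone L XY.o y W s' t2 := by
  cases y with
  | b => exact Or.inl ((hgts.2 rfl).1)
  | o =>
    rcases Relation.ReflTransGen.cases_head hgts.1 with heq | ⟨z, hz, hzs⟩
    · exact Or.inl (heq ▸ hW)
    · exact Or.inr ⟨Or.inr ⟨rfl, rfl⟩, t', Relation.TransGen.head' hz hzs, hW⟩

theorem htrans_o (hB : L.IsGenBisimED XY.o y W) :
    ∀ {p q : S} {a : A} {p' : S}, W p q → L.Trans p a p' →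
    (a = L.tau ∧ W p' q) ∨ RealP L XY.o y W p a p' q := by
  intro p q a p' hW htr
  rcases hB.1.2 p q a p' hW htr with ⟨ha, hW'⟩ | ⟨t1, t2, t', hgtsx, htr2, hgtsy, hW'⟩
  · exact Or.inl ⟨ha, hW'⟩
  · refine Or.inr ⟨t1, t2, ?_, htr2, yDone_of_genTauStar L y W hgtsy hW'⟩
    exact Relation.ReflTransGen.mono (p := SStep L XY.o W p)
      (fun a b h => ⟨h, fun hxb => absurd hxb (by decide)⟩) _ _ hgtsx.1

theorem hdiv_o (hB : L.IsGenBisimED XY.o y W) :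
    ∀ {t : S} (f : ℕ → S), (∀ i, L.TauStep (f i) (f (i + 1))) →
    (∀ i, W (f i) t) → ∃ k, RealP L XY.o y W (f k) L.tau (f (k + 1)) t := by
  intro t f hstep hWf
  obtain ⟨t', k, hTP, hW⟩ := hB.2 (f 1) t (hWf 1) (fun n => f (1 + n)) rfl
    (fun i => by
      have := hstep (1 + i)
      simpa [show 1 + i + 1 = 1 + (i + 1) from by omega] using this)
  refine ⟨k, realP_of_tauPlus_o L y W hTP ?_⟩
  simpa [show 1 + k = k + 1 from by omega] using hW

end InstO

section Semi
variable {S : Type u} {A : Type v}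
variable (L : LTS S A) (x y : XY)

/-- semi-variant of the generic bisimulation with explicit divergence -/
def IsSemi (R : S → S → Prop) : Prop :=
  (∀ s t, R s t → R t s) ∧
  (∀ s t a s', R s t → L.Trans s a s' →
    (a = L.tau ∧ ∃ t'', L.TauStar t t'' ∧ R s t'' ∧ R s' t'') ∨
    ∃ t1 t2 t', L.GenTauStar x R s t t1 ∧ L.Trans t1 a t2 ∧
      L.GenTauStar y R s' t2 t' ∧ R s' t') ∧
  (∀ s t, R s t → ∀ f : ℕ → S, f 0 = s → (∀ i, L.TauStep (f i) (f (i + 1))) →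
    ∃ t' k, L.TauPlus t t' ∧ R (f k) t')

/-- semi-generic bisimilarity with explicit divergence -/
def SB (s t : S) : Prop := ∃ R, IsSemi L x y R ∧ R s t

theorem gts_mono {z : XY} {R R' : S → S → Prop} (h : ∀ {a b : S}, R a b → R' a b)
    {t s s' : S} (hg : L.GenTauStar z R t s s') : L.GenTauStar z R' t s s' :=
  ⟨hg.1, fun hz => ⟨h (hg.2 hz).1, h (hg.2 hz).2⟩⟩

theorem isSemi_of_bisED {R : S → S → Prop} (hR : L.IsGenBisimED x y R) :
    IsSemi L x y R := by
  refine ⟨hR.1.1, ?_, hR.2⟩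
  intro s t a s' hst htr
  rcases hR.1.2 s t a s' hst htr with ⟨ha, hW⟩ | hreal
  · exact Or.inl ⟨ha, t, Relation.ReflTransGen.refl, hst, hW⟩
  · exact Or.inr hreal

theorem SB_symm {s t : S} (h : SB L x y s t) : SB L x y t s := by
  obtain ⟨R, hR, hst⟩ := h
  exact ⟨R, hR, hR.1 _ _ hst⟩

theorem SB_semi : IsSemi L x y (SB L x y) := by
  refine ⟨fun s t h => SB_symm L x y h, ?_, ?_⟩
  · intro s t a s' hst htr
    obtain ⟨R, hR, hst⟩ := hst
    rcases hR.2.1 s t a s' hst htr with ⟨ha, t'', h1, h2, h3⟩ | ⟨t1, t2, t', h1, h2, h3, h4⟩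
    · exact Or.inl ⟨ha, t'', h1, ⟨R, hR, h2⟩, ⟨R, hR, h3⟩⟩
    · exact Or.inr ⟨t1, t2, t', gts_mono L (fun h => ⟨R, hR, h⟩) h1, h2,
        gts_mono L (fun h => ⟨R, hR, h⟩) h3, ⟨R, hR, h4⟩⟩
  · intro s t hst f hf0 hfs
    obtain ⟨R, hR, hst⟩ := hst
    obtain ⟨t', k, hTP, hW⟩ := hR.2.2 s t hst f hf0 hfs
    exact ⟨t', k, hTP, R, hR, hW⟩

/-- weak moves are matched weakly (relative condition) -/
theorem M1 {R : S → S → Prop} (hS : IsSemi L x y R) {v t v' : S}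
    (hvt : R v t) (hvv : L.TauStar v v') : ∃ t', L.TauStar t t' ∧ R v' t' := by
  induction hvv with
  | refl => exact ⟨t, Relation.ReflTransGen.refl, hvt⟩
  | tail hsteps hstep ih =>
    obtain ⟨t1, ht1, hR1⟩ := ih
    rcases hS.2.1 _ _ _ _ hR1 hstep with ⟨_, t'', h1, _, h3⟩ | ⟨u1, u2, u', h1, h2, h3, h4⟩
    · exact ⟨t'', ht1.trans h1, h3⟩
    · exact ⟨u', ht1.trans ((h1.1.tail h2).trans h3.1), h4⟩

theorem tauStar_of_steps {g : ℕ → S} (hg : ∀ m, L.TauStep (g m) (g (m + 1)))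
    {m m' : ℕ} (h : m ≤ m') : L.TauStar (g m) (g m') := by
  induction m' with
  | zero =>
    obtain rfl : m = 0 := by omega
    exact Relation.ReflTransGen.refl
  | succ m' ih =>
    rcases Nat.lt_or_ge m (m' + 1) with hlt | hge
    · exact (ih (by omega)).tail (hg m')
    · obtain rfl : m = m' + 1 := by omega
      exact Relation.ReflTransGen.refl

/-- Flattening a chain of `TauPlus`-links into a single divergence. -/
theorem flatten {h : ℕ → S} (hc : ∀ i, L.TauPlus (h i) (h (i + 1))) :
    ∃ (g : ℕ → S) (mark : ℕ → ℕ), g 0 = h 0 ∧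
      (∀ m, L.TauStep (g m) (g (m + 1))) ∧ (∀ i, g (mark i) = h i) ∧ (∀ i, i ≤ mark i) := by
  have hch : ∀ i, ∃ n, 1 ≤ n ∧ ∃ c : ℕ → S, c 0 = h i ∧ c n = h (i + 1) ∧
      ∀ l < n, L.TauStep (c l) (c (l + 1)) := by
    intro i
    obtain ⟨n, hn1, c, h0, hn, hs⟩ := transGen_iff_iPath.mp (hc i)
    exact ⟨n, hn1, c, h0, hn, hs⟩
  choose n hn1 c hc0 hcn hcs using hch
  set mark : ℕ → ℕ := fun i => ∑ j ∈ Finset.range i, n j with hmark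
  have hmark_succ : ∀ i, mark (i + 1) = mark i + n i := by
    intro i; simp [hmark, Finset.sum_range_succ]
  have hmark_mono : ∀ i, i ≤ mark i := by
    intro i
    induction i with
    | zero => simp [hmark]
    | succ i ih => rw [hmark_succ]; have := hn1 i; omega
  have hmark_lt : ∀ i, mark i < mark (i + 1) := by
    intro i; rw [hmark_succ]; have := hn1 i; omega
  have hmark_mono' : ∀ {i j}, i ≤ j → mark i ≤ mark j := by
    intro i j hij
    induction j with
    | zero =>
      obtain rfl : i = 0 := by omega
      exact le_rfl
    | succ j ih =>
      rcases Nat.lt_or_ge i (j + 1) with hlt | hge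
      · have := ih (by omega); have := hmark_lt j; omega
      · obtain rfl : i = j + 1 := by omega
        exact le_rfl
  set I : ℕ → ℕ := fun m => Nat.findGreatest (fun i => mark i ≤ m) m with hI
  have hI_le : ∀ m, mark (I m) ≤ m := by
    intro m
    exact Nat.findGreatest_spec (P := fun i => mark i ≤ m) (Nat.zero_le m) (by simp [hmark])
  have hI_lt : ∀ m, m < mark (I m + 1) := by
    intro m
    by_contra hcon
    push_neg at hcon
    exact Nat.findGreatest_is_greatest (Nat.lt_succ_self _)
      (le_trans (hmark_mono _) hcon) hcon
  have hI_eq : ∀ m i, mark i ≤ m → m < mark (i + 1) → I m = i := by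
    intro m i h1 h2
    have hge : i ≤ I m := Nat.le_findGreatest (le_trans (hmark_mono i) h1) h1
    have hle : I m ≤ i := by
      by_contra hcon
      push_neg at hcon
      have := hmark_mono' (show i + 1 ≤ I m from hcon)
      have := hI_le m
      omega
    omega
  set g : ℕ → S := fun m => c (I m) (m - mark (I m)) with hg
  have hI0 : I 0 = 0 := hI_eq 0 0 (by simp [hmark]) (by have := hmark_lt 0; simp [hmark] at *; omega)
  have hgmark : ∀ i, g (mark i) = h i := by
    intro i
    have : I (mark i) = i := hI_eq _ _ (le_refl _) (hmark_lt i)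
    simp [hg, this, hc0]
  refine ⟨g, mark, ?_, ?_, hgmark, hmark_mono⟩
  · have h0 : mark 0 = 0 := by simp [hmark]
    have := hgmark 0
    rwa [h0] at this
  · intro m
    set i := I m with hidef
    have h1 : mark i ≤ m := hI_le m
    have h2 : m < mark i + n i := by have := hI_lt m; rwa [hmark_succ] at this
    set k := m - mark i with hk
    have hkn : k < n i := by omega
    rcases Nat.lt_or_ge (k + 1) (n i) with hlt | hge
    · have : I (m + 1) = i := hI_eq _ _ (by omega) (by rw [hmark_succ]; omega)
      have hgm1 : g (m + 1) = c i (k + 1) := by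
        simp only [hg, this]
        congr 1
        omega
      rw [hgm1]
      exact hcs i k hkn
    · have hkeq : k + 1 = n i := by omega
      have hm1 : m + 1 = mark (i + 1) := by rw [hmark_succ]; omega
      have : g (m + 1) = h (i + 1) := by rw [hm1]; exact hgmark (i + 1)
      rw [this, ← hcn i, ← hkeq]
      exact hcs i k hkn

end Semi

section Semi
variable {S : Type u} {A : Type v}
variable (L : LTS S A) (x y : XY)

theorem tauPlus_trans_star {a b c : S} (h1 : L.TauPlus a b) (h2 : L.TauStar b c) :
    L.TauPlus a c := by
  induction h2 with
  | refl => exact h1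
  | tail _ hstep ih => exact ih.tail hstep

theorem comp_semi (hx : x = XY.b) :
    IsSemi L x y (fun s t => ∃ v, SB L x y s v ∧ SB L x y v t) := by
  have hB : IsSemi L x y (SB L x y) := SB_semi L x y
  refine ⟨?_, ?_, ?_⟩
  · rintro s t ⟨v, h1, h2⟩; exact ⟨v, SB_symm L x y h2, SB_symm L x y h1⟩
  · rintro s t a s' ⟨v, hsv, hvt⟩ htr
    rcases hB.2.1 s v a s' hsv htr with ⟨ha, v'', hvv, hsv'', hs'v''⟩ | hreal
    · obtain ⟨t'', htt, hv''t⟩ := M1 L x y hB hvt hvv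
      exact Or.inl ⟨ha, t'', htt, ⟨v'', hsv'', hv''t⟩, ⟨v'', hs'v'', hv''t⟩⟩
    · obtain ⟨v1, v2, v', hgx, htrv, hgy, hs'v'⟩ := hreal
      obtain ⟨t1', ht1, hv1t1⟩ := M1 L x y hB hvt hgx.1
      have hsv1 : SB L x y s v1 := (hgx.2 hx).2
      rcases hB.2.1 v1 t1' a v2 hv1t1 htrv with ⟨ha, w, ht1w, hv1w, hv2w⟩ | hreal2
      · obtain ⟨w', hww', hv'w'⟩ := M1 L x y hB hv2w hgy.1
        cases y with
        | b =>
          exact Or.inl ⟨ha, w, ht1.trans ht1w, ⟨v1, hsv1, hv1w⟩, ⟨v2, (hgy.2 rfl).1, hv2w⟩⟩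
        | o =>
          rcases Relation.ReflTransGen.cases_head hww' with heq | ⟨w1, hw1, hw1s⟩
          · exact Or.inl ⟨ha, w, ht1.trans ht1w, ⟨v1, hsv1, hv1w⟩,
              ⟨v', hs'v', heq ▸ hv'w'⟩⟩
          · refine Or.inr ⟨w, w1, w',
              ⟨ht1.trans ht1w, fun _ => ⟨⟨v, hsv, hvt⟩, ⟨v1, hsv1, hv1w⟩⟩⟩,
              (by rw [ha]; exact hw1), ⟨hw1s, fun hy => absurd hy (by decide)⟩, ⟨v', hs'v', hv'w'⟩⟩
      · obtain ⟨u1, u2, u', hgx2, htru, hgy2, hv2u'⟩ := hreal2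
        obtain ⟨u'', hu'u'', hv'u''⟩ := M1 L x y hB hv2u' hgy.1
        refine Or.inr ⟨u1, u2, u'',
          ⟨ht1.trans hgx2.1, fun _ => ⟨⟨v, hsv, hvt⟩, ⟨v1, hsv1, (hgx2.2 hx).2⟩⟩⟩,
          htru,
          ⟨hgy2.1.trans hu'u'', fun hy => ⟨⟨v2, (hgy.2 hy).1, (hgy2.2 hy).1⟩,
            ⟨v', hs'v', hv'u''⟩⟩⟩,
          ⟨v', hs'v', hv'u''⟩⟩
  · rintro s t ⟨v, hsv, hvt⟩ f hf0 hfs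
    -- iterate the divergence condition along the middle component
    have hstep : ∀ p : ℕ × S, SB L x y (f p.1) p.2 →
        ∃ q : ℕ × S, L.TauPlus p.2 q.2 ∧ SB L x y (f q.1) q.2 := by
      intro p hp
      obtain ⟨t', k, hTP, hW⟩ := hB.2.2 _ _ hp (fun n => f (p.1 + n)) rfl
        (fun i => by simpa [show p.1 + i + 1 = p.1 + (i + 1) from by omega] using hfs (p.1 + i))
      exact ⟨(p.1 + k, t'), hTP, hW⟩
    have hF : ∀ p : ℕ × S, ∃ q : ℕ × S,
        SB L x y (f p.1) p.2 → L.TauPlus p.2 q.2 ∧ SB L x y (f q.1) q.2 := by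
      intro p
      by_cases hp : SB L x y (f p.1) p.2
      · obtain ⟨q, hq⟩ := hstep p hp
        exact ⟨q, fun _ => hq⟩
      · exact ⟨p, fun h => absurd h hp⟩
    choose F hFs using hF
    set kv : ℕ → ℕ × S := fun i => F^[i] (0, v) with hkv
    have hkv0 : kv 0 = (0, v) := rfl
    have hkvs : ∀ i, kv (i + 1) = F (kv i) := by
      intro i
      simp [hkv, Function.iterate_succ_apply']
    have hPinv : ∀ i, SB L x y (f (kv i).1) (kv i).2 ∧
        L.TauPlus (kv i).2 (kv (i + 1)).2 := by
      have base : SB L x y (f (kv 0).1) (kv 0).2 := by rw [hkv0]; simpa [hf0] using hsv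
      have ind : ∀ i, SB L x y (f (kv i).1) (kv i).2 →
          SB L x y (f (kv (i+1)).1) (kv (i+1)).2 ∧ L.TauPlus (kv i).2 (kv (i + 1)).2 := by
        intro i hp
        have := hFs (kv i) hp
        rw [← hkvs i] at this
        exact ⟨this.2, this.1⟩
      intro i
      induction i with
      | zero => exact ⟨base, (ind 0 base).2⟩
      | succ i ih => exact ⟨(ind i ih.1).1, (ind (i + 1) (ind i ih.1).1).2⟩
    obtain ⟨g, mark, hg0, hgs, hgm, hmle⟩ := flatten L (fun i => (hPinv i).2)
    have hg0' : g 0 = v := by rw [hg0]; rfl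
    obtain ⟨t', m', hTPt, hBg⟩ := hB.2.2 v t hvt g hg0' hgs
    have hseg : L.TauStar (g m') (g (mark m')) := tauStar_of_steps L hgs (hmle m')
    obtain ⟨t'', ht't'', hBg'⟩ := M1 L x y hB hBg hseg
    refine ⟨t'', (kv m').1, tauPlus_trans_star L hTPt ht't'', ?_⟩
    exact ⟨(kv m').2, (hPinv m').1, by rw [← hgm m']; exact hBg'⟩

/-- transitivity of semi-generic bisimilarity (branching case) -/
theorem SB_trans (hx : x = XY.b) {a b c : S}
    (h1 : SB L x y a b) (h2 : SB L x y b c) : SB L x y a c :=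
  ⟨_, comp_semi L x y hx, ⟨b, h1, h2⟩⟩

end Semi

section Semi
variable {S : Type u} {A : Type v}
variable (L : LTS S A) (x y : XY)

theorem tauStar_of_bounded_steps {n : ℕ} {c : ℕ → S}
    (hs : ∀ l < n, L.TauStep (c l) (c (l + 1))) :
    ∀ {i j}, i ≤ j → j ≤ n → L.TauStar (c i) (c j) := by
  intro i j hij hjn
  induction j with
  | zero =>
    obtain rfl : i = 0 := by omega
    exact Relation.ReflTransGen.refl
  | succ j ih =>
    rcases Nat.lt_or_ge i (j + 1) with hlt | hge
    · exact (ih (by omega) (by omega)).tail (hs j (by omega))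
    · obtain rfl : i = j + 1 := by omega
      exact Relation.ReflTransGen.refl

/-- stuttering pairs -/
def Stut (p q : S) : Prop :=
  ∃ (n : ℕ) (c : ℕ → S) (i j : ℕ), i ≤ n ∧ j ≤ n ∧ (∀ l < n, L.TauStep (c l) (c (l + 1))) ∧
    SB L x y (c 0) (c n) ∧ p = c i ∧ q = c j

theorem stut_semi : IsSemi L x y (fun p q => SB L x y p q ∨ Stut L x y p q) := by
  have hB : IsSemi L x y (SB L x y) := SB_semi L x y
  refine ⟨?_, ?_, ?_⟩
  · rintro s t (h | ⟨n, c, i, j, hi, hj, hs, hBn, rfl, rfl⟩)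
    · exact Or.inl (SB_symm L x y h)
    · exact Or.inr ⟨n, c, j, i, hj, hi, hs, hBn, rfl, rfl⟩
  · rintro s t a s' (h | ⟨n, c, i, j, hi, hj, hs, hBn, rfl, rfl⟩) htr
    · rcases hB.2.1 s t a s' h htr with ⟨ha, t'', h1, h2, h3⟩ | ⟨t1, t2, t', h1, h2, h3, h4⟩
      · exact Or.inl ⟨ha, t'', h1, Or.inl h2, Or.inl h3⟩
      · exact Or.inr ⟨t1, t2, t', gts_mono L Or.inl h1, h2, gts_mono L Or.inl h3, Or.inl h4⟩
    · obtain ⟨r, hcnr, hcir⟩ := M1 L x y hB hBn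
        (tauStar_of_bounded_steps L hs (Nat.zero_le i) hi)
      have hseg : L.TauStar (c j) r :=
        (tauStar_of_bounded_steps L hs hj (le_refl n)).trans hcnr
      rcases hB.2.1 _ _ a s' hcir htr with ⟨ha, r'', h1, h2, h3⟩ |
        ⟨u1, u2, u3, hgx, htr2, hgy, hR⟩
      · exact Or.inl ⟨ha, r'', hseg.trans h1, Or.inl h2, Or.inl h3⟩
      · refine Or.inr ⟨u1, u2, u3,
          ⟨hseg.trans hgx.1, fun hxb =>
            ⟨Or.inr ⟨n, c, i, j, hi, hj, hs, hBn, rfl, rfl⟩, Or.inl (hgx.2 hxb).2⟩⟩,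
          htr2, gts_mono L Or.inl hgy, Or.inl hR⟩
  · rintro s t (h | ⟨n, c, i, j, hi, hj, hs, hBn, rfl, rfl⟩) f hf0 hfs
    · obtain ⟨t', k, h1, h2⟩ := hB.2.2 s t h f hf0 hfs
      exact ⟨t', k, h1, Or.inl h2⟩
    · obtain ⟨r, hcnr, hcir⟩ := M1 L x y hB hBn
        (tauStar_of_bounded_steps L hs (Nat.zero_le i) hi)
      obtain ⟨t', k, h1, h2⟩ := hB.2.2 _ _ hcir f hf0 hfs
      refine ⟨t', k, ?_, Or.inl h2⟩
      exact Relation.TransGen.trans_right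
        ((tauStar_of_bounded_steps L hs hj (le_refl n)).trans hcnr) h1

/-- semi-generic bisimilarity with explicit divergence satisfies stuttering -/
theorem SB_stutter {n : ℕ} {c : ℕ → S}
    (hs : ∀ l < n, L.TauStep (c l) (c (l + 1))) (hBn : SB L x y (c 0) (c n))
    {i j : ℕ} (hi : i ≤ n) (hj : j ≤ n) : SB L x y (c i) (c j) :=
  ⟨_, stut_semi L x y, Or.inr ⟨n, c, i, j, hi, hj, hs, hBn, rfl, rfl⟩⟩

end Semi

section Semi
variable {S : Type u} {A : Type v}
variable (L : LTS S A) (y : XY)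

/-- interface: transfer condition for `SB` in the branching (x = b) case -/
theorem htrans_b :
    ∀ {p q : S} {a : A} {p' : S}, SB L XY.b y p q → L.Trans p a p' →
    (a = L.tau ∧ SB L XY.b y p' q) ∨ RealP L XY.b y (SB L XY.b y) p a p' q := by
  intro p q a p' hpq htr
  have hB := SB_semi L XY.b y
  have hqp := SB_symm L XY.b y hpq
  rcases hB.2.1 p q a p' hpq htr with ⟨ha, t'', htt, hBpt'', hBp't''⟩ |
    ⟨t1, t2, t', hgx, htr2, hgy, hR⟩
  · obtain ⟨nn, cc, h0, hn, hs⟩ := reflTransGen_iff_iPath.mp htt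
    obtain ⟨cc, h0, hn, hs⟩ : ∃ cc : ℕ → S, cc 0 = q ∧ cc nn = t'' ∧
        ∀ l < nn, L.TauStep (cc l) (cc (l + 1)) := ⟨cc, h0, hn, hs⟩
    cases nn with
    | zero => exact Or.inl ⟨ha, by rw [← hn, h0] at hBp't''; exact hBp't''⟩
    | succ nn' =>
      have hqt'' : SB L XY.b y (cc 0) (cc (nn' + 1)) := by
        rw [h0, hn]
        exact SB_trans L XY.b y rfl hqp hBpt''
      have hstut : ∀ l ≤ nn' + 1, SB L XY.b y p (cc l) := by
        intro l hl
        have h1 : SB L XY.b y (cc 0) (cc l) :=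
          SB_stutter L XY.b y hs hqt'' (Nat.zero_le _) hl
        rw [h0] at h1
        exact SB_trans L XY.b y rfl hpq h1
      refine Or.inr ⟨cc nn', t'', ?_, by rw [ha]; exact hn ▸ hs nn' (by omega), Or.inl hBp't''⟩
      refine IPath.to_reflTransGen (r := SStep L XY.b (SB L XY.b y) p) (n := nn')
        ⟨cc, h0, rfl, fun l hl => ⟨hs l (by omega), fun _ => hstut (l + 1) (by omega)⟩⟩
  · have hBpt1 : SB L XY.b y p t1 := (hgx.2 rfl).2
    obtain ⟨nn, cc, h0, hn, hs⟩ := reflTransGen_iff_iPath.mp hgx.1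
    have hqt1 : SB L XY.b y (cc 0) (cc nn) := by
      rw [h0, hn]
      exact SB_trans L XY.b y rfl hqp hBpt1
    have hstut : ∀ l ≤ nn, SB L XY.b y p (cc l) := by
      intro l hl
      have h1 : SB L XY.b y (cc 0) (cc l) :=
        SB_stutter L XY.b y hs hqt1 (Nat.zero_le _) hl
      rw [h0] at h1
      exact SB_trans L XY.b y rfl hpq h1
    refine Or.inr ⟨t1, t2, ?_, htr2, ?_⟩
    · exact IPath.to_reflTransGen (r := SStep L XY.b (SB L XY.b y) p) (n := nn)
        ⟨cc, h0, hn, fun l hl => ⟨hs l hl, fun _ => hstut (l + 1) (by omega)⟩⟩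
    · cases y with
      | b => exact Or.inl (hgy.2 rfl).1
      | o =>
        rcases Relation.ReflTransGen.cases_head hgy.1 with heq | ⟨z, hz, hzs⟩
        · exact Or.inl (heq ▸ hR)
        · exact Or.inr ⟨Or.inr ⟨rfl, rfl⟩, t', Relation.TransGen.head' hz hzs, hR⟩

/-- interface: divergence condition for `SB` in the branching case -/
theorem hdiv_b :
    ∀ {t : S} (f : ℕ → S), (∀ i, L.TauStep (f i) (f (i + 1))) →
    (∀ i, SB L XY.b y (f i) t) →
    ∃ k, RealP L XY.b y (SB L XY.b y) (f k) L.tau (f (k + 1)) t := by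
  intro t f hfs hWf
  have hB := SB_semi L XY.b y
  obtain ⟨t', k, hTP, hW⟩ := hB.2.2 (f 1) t (hWf 1) (fun n => f (1 + n)) rfl
    (fun i => by simpa [show 1 + i + 1 = 1 + (i + 1) from by omega] using hfs (1 + i))
  have hW' : SB L XY.b y (f (k + 1)) t' := by
    rwa [show 1 + k = k + 1 from by omega] at hW
  obtain ⟨n, hn1, c, h0, hn, hs⟩ : ∃ n, 1 ≤ n ∧ ∃ c : ℕ → S, c 0 = t ∧ c n = t' ∧
      ∀ l < n, L.TauStep (c l) (c (l + 1)) := by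
    obtain ⟨n, hn1, c, h0, hn, hs⟩ := transGen_iff_iPath.mp hTP
    exact ⟨n, hn1, c, h0, hn, hs⟩
  have htt' : SB L XY.b y (c 0) (c n) := by
    rw [h0, hn]
    exact SB_trans L XY.b y rfl (SB_symm L XY.b y (hWf (k + 1))) hW'
  have hstut : ∀ l ≤ n, SB L XY.b y (f k) (c l) := by
    intro l hl
    have h1 : SB L XY.b y (c 0) (c l) := SB_stutter L XY.b y hs htt' (Nat.zero_le _) hl
    rw [h0] at h1
    exact SB_trans L XY.b y rfl (hWf k) h1
  obtain ⟨n', rfl⟩ : ∃ n', n = n' + 1 := ⟨n - 1, by omega⟩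
  refine ⟨k, c n', t', ?_, hn ▸ hs n' (by omega), Or.inl hW'⟩
  exact IPath.to_reflTransGen (r := SStep L XY.b (SB L XY.b y) (f k)) (n := n')
    ⟨c, h0, rfl, fun l hl => ⟨hs l (by omega), fun _ => hstut (l + 1) (by omega)⟩⟩

end Semi

/-- Completeness of the generic bisimulation game with explicit
divergence: if `s ≈ed_{(x,y)} t` then Duplicator wins the `E(x,y)`-generic
bisimulation with explicit divergence game from `⟨(s,t),†,†,*⟩_S`. -/
theorem genBisimilarED_imp_gbedEquiv {S : Type u} {A : Type v} (L : LTS S A)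
    (x y : XY) (s t : S) (h : L.GenBisimilarED x y s t) :
    L.gbedEquiv (Exy x y) s t := by
  obtain ⟨R, hR, hst⟩ := h
  cases x with
  | o =>
    exact game_win L XY.o y R (fun {p q} hh => hR.1.1 p q hh)
      (htrans_o L y R hR) (hdiv_o L y R hR) hst
  | b =>
    exact game_win L XY.b y (SB L XY.b y) (fun {p q} hh => SB_symm L XY.b y hh)
      (htrans_b L y) (hdiv_b L y) ⟨R, isSemi_of_bisED L XY.b y hR, hst⟩

end GamesBisim
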